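/- arXiv:1906.07341 — 2 statements merged into one kernel-verified Lean document; each statement's English description precedes it below -/
import Mathlib

section
/- Let n ≥ 2 and let S₊, S₋ partition {1,…,n} with |S₊| = n₊ ≥ 1 and |S₋| = n₋ ≥ 1, let W_{km} = 1/(n₊ n₋) if exactly one of k, m lies in S₊ and 0 otherwise, and L = diag(W·1) − W. Then for any A ∈ ℝ^{n×a} and B ∈ ℝ^{n×b}, writing A₊ ∈ ℝ^{n₊×a} and A₋ ∈ ℝ^{n₋×a} for the submatrices of rows of A indexed by S₊ and S₋ respectively (similarly B₊, B₋), one has Aᵀ L B = (1/n₊)·A₊ᵀ B₊ + (1/n₋)·A₋ᵀ B₋ − (1/(n₊ n₋))·( (A₊ᵀ 1)(1ᵀ B₋) + (A₋ᵀ 1)(1ᵀ B₊) ), where 1 denotes the all-ones vector of appropriate dimension. -/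
/-!
Split the AUC weight matrix as `c • (1_{S₊} 1_{S₋}ᵀ + 1_{S₋} 1_{S₊}ᵀ)` with `c = 1/(n₊ n₋)`.
The bilinear form of the Laplacian is `∑ₖ dₖ aₖ bₖ − aᵀ W b`; the rank-one pieces of `W` turn
`aᵀ W b` into products of sums over `S₊` and `S₋`, and the degree `dₖ` is `c n₋ = 1/n₊` on `S₊`
and `c n₊ = 1/n₋` on `S₋`.
-/

open Matrix Finset

theorem transpose_mul_mul_apply {ι α β R : Type*} [Fintype ι] [CommSemiring R]
    (A : Matrix ι α R) (L : Matrix ι ι R) (B : Matrix ι β R) (s : α) (t : β) :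
    (Aᵀ * L * B) s t = ∑ k, ∑ m, A k s * L k m * B m t := by
  simp only [mul_apply, transpose_apply, sum_mul]
  exact sum_comm

theorem transpose_mul_laplacian_mul_apply {ι α β R : Type*} [Fintype ι] [DecidableEq ι]
    [CommRing R] (W : Matrix ι ι R) (A : Matrix ι α R) (B : Matrix ι β R) (s : α) (t : β) :
    (Aᵀ * (diagonal (fun k => ∑ m, W k m) - W) * B) s t =
      ∑ k, (∑ m, W k m) * A k s * B k t - ∑ k, ∑ m, A k s * W k m * B m t := by
  simp [transpose_mul_mul_apply, diagonal_apply, mul_sub, mul_comm]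

theorem sum_sum_mul_ite_mem_and_mem_mul {ι R : Type*} [Fintype ι] [DecidableEq ι]
    [CommSemiring R] (P M : Finset ι) (c : R) (x y : ι → R) :
    ∑ k, ∑ m, x k * (if k ∈ P ∧ m ∈ M then c else 0) * y m =
      c * ((∑ p ∈ P, x p) * ∑ q ∈ M, y q) := by
  rw [sum_mul_sum, mul_sum]
  simp_rw [mul_sum, ite_and]
  simp only [apply_ite, mul_zero, ite_mul, zero_mul, sum_ite_irrel, sum_ite_mem, univ_inter,
    sum_const_zero]
  exact sum_congr rfl fun _ _ => sum_congr rfl fun _ _ => by ring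

section AUCWeight

variable {ι R : Type*} [DecidableEq ι]

def aucWeight [Zero R] (P M : Finset ι) (c : R) : Matrix ι ι R :=
  fun k m => if (k ∈ P ∧ m ∈ M) ∨ (k ∈ M ∧ m ∈ P) then c else 0

variable {P M : Finset ι}

theorem aucWeight_apply_of_disjoint [AddZeroClass R] (h : Disjoint P M) (c : R) (k m : ι) :
    aucWeight P M c k m =
      (if k ∈ P ∧ m ∈ M then c else 0) + (if k ∈ M ∧ m ∈ P then c else 0) := by
  have := disjoint_left.mp h
  unfold aucWeight
  by_cases hkP : k ∈ P <;> by_cases hkM : k ∈ M <;> by_cases hmP : m ∈ P <;> simp_all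

variable [Fintype ι]

theorem sum_aucWeight_apply [CommSemiring R] (h : Disjoint P M) (c : R) (k : ι) :
    ∑ m, aucWeight P M c k m = (if k ∈ P then c * #M else 0) + (if k ∈ M then c * #P else 0) := by
  simp [aucWeight_apply_of_disjoint h, sum_add_distrib, ite_and, mul_comm]

theorem sum_aucWeight_inv_card_mul_card_apply {K : Type*} [Field K] (h : Disjoint P M)
    (hP : (#P : K) ≠ 0) (hM : (#M : K) ≠ 0) (k : ι) :
    ∑ m, aucWeight P M (1 / ((#P : K) * #M)) k m =
      (if k ∈ P then 1 / (#P : K) else 0) + (if k ∈ M then 1 / (#M : K) else 0) := by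
  rw [sum_aucWeight_apply h]
  congr 1 <;> congr 1 <;> field_simp

theorem sum_sum_mul_aucWeight_mul [CommSemiring R] (h : Disjoint P M) (c : R) (x y : ι → R) :
    ∑ k, ∑ m, x k * aucWeight P M c k m * y m =
      c * ((∑ p ∈ P, x p) * (∑ q ∈ M, y q) + (∑ q ∈ M, x q) * (∑ p ∈ P, y p)) := by
  simp only [aucWeight_apply_of_disjoint h, mul_add, add_mul, sum_add_distrib,
    sum_sum_mul_ite_mem_and_mem_mul]

end AUCWeight

theorem stmt5_general {n a b : ℕ} (Sp Sm : Finset (Fin n))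
    (hdisj : Disjoint Sp Sm)
    (hp : 1 ≤ Sp.card) (hm : 1 ≤ Sm.card)
    (W L : Matrix (Fin n) (Fin n) ℝ)
    (hW : ∀ k m : Fin n, W k m =
      if (k ∈ Sp ∧ m ∈ Sm) ∨ (k ∈ Sm ∧ m ∈ Sp) then
        1 / ((Sp.card : ℝ) * (Sm.card : ℝ)) else 0)
    (hL : L = Matrix.diagonal (fun k => ∑ m, W k m) - W)
    (A : Matrix (Fin n) (Fin a) ℝ) (B : Matrix (Fin n) (Fin b) ℝ) :
    ∀ (s : Fin a) (t : Fin b),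
      (Aᵀ * L * B) s t =
        (1 / (Sp.card : ℝ)) * ∑ p ∈ Sp, A p s * B p t +
        (1 / (Sm.card : ℝ)) * ∑ q ∈ Sm, A q s * B q t -
        (1 / ((Sp.card : ℝ) * (Sm.card : ℝ))) *
          ((∑ p ∈ Sp, A p s) * (∑ q ∈ Sm, B q t) +
           (∑ q ∈ Sm, A q s) * (∑ p ∈ Sp, B p t)) := by
  intro s t
  have hW : W = aucWeight Sp Sm (1 / ((#Sp : ℝ) * #Sm)) := Matrix.ext hW
  have hdeg := sum_aucWeight_inv_card_mul_card_apply (K := ℝ) hdisj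
    (Nat.cast_ne_zero.mpr (by omega)) (Nat.cast_ne_zero.mpr (by omega))
  rw [hL, transpose_mul_laplacian_mul_apply, hW, sum_sum_mul_aucWeight_mul hdisj]
  simp only [hdeg, add_mul, ite_mul, zero_mul, sum_add_distrib, sum_ite_mem, univ_inter, mul_sum,
    mul_assoc]

/-- closed-form identity behind the efficient AUC evaluation:
for the Laplacian `L = diag(W·1) − W` of the AUC graph,
`AᵀLB = (1/n₊)A₊ᵀB₊ + (1/n₋)A₋ᵀB₋
      − (1/(n₊n₋))((A₊ᵀ1)(1ᵀB₋) + (A₋ᵀ1)(1ᵀB₊))`,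
stated entrywise: row restrictions to `S₊`/`S₋` become sums over `S₊`/`S₋`. -/
theorem stmt5 {n a b : ℕ} (hn : 2 ≤ n) (Sp Sm : Finset (Fin n))
    (hdisj : Disjoint Sp Sm) (hunion : Sp ∪ Sm = Finset.univ)
    (hp : 1 ≤ Sp.card) (hm : 1 ≤ Sm.card)
    (W L : Matrix (Fin n) (Fin n) ℝ)
    (hW : ∀ k m : Fin n, W k m =
      if (k ∈ Sp ∧ m ∈ Sm) ∨ (k ∈ Sm ∧ m ∈ Sp) then
        1 / ((Sp.card : ℝ) * (Sm.card : ℝ)) else 0)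
    (hL : L = Matrix.diagonal (fun k => ∑ m, W k m) - W)
    (A : Matrix (Fin n) (Fin a) ℝ) (B : Matrix (Fin n) (Fin b) ℝ) :
    ∀ (s : Fin a) (t : Fin b),
      (Aᵀ * L * B) s t =
        (1 / (Sp.card : ℝ)) * ∑ p ∈ Sp, A p s * B p t +
        (1 / (Sm.card : ℝ)) * ∑ q ∈ Sm, A q s * B q t -
        (1 / ((Sp.card : ℝ) * (Sm.card : ℝ))) *
          ((∑ p ∈ Sp, A p s) * (∑ q ∈ Sm, B q t) +
           (∑ q ∈ Sm, A q s) * (∑ p ∈ Sp, B p t)) :=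
  stmt5_general Sp Sm hdisj hp hm W L hW hL A B
end

section
/- Let n ≥ 2 and let S₊, S₋ partition {1,…,n} with |S₊| = n₊ ≥ 1 and |S₋| = n₋ ≥ 1, let W_{km} = 1/(n₊ n₋) if exactly one of k, m lies in S₊ and 0 otherwise, and L = diag(W·1) − W. Then L is symmetric positive semidefinite and its spectral norm satisfies ‖L‖₂ = (n₊ + n₋)/(n₊ n₋); in particular every eigenvalue of L lies in [0, n/(n₊ n₋)] where n = n₊ + n₋. -/
open Matrix

/-- The spectral norm (largest singular value) of a real matrix. -/
noncomputable def matSpectralNorm {m n : ℕ} (A : Matrix (Fin m) (Fin n) ℝ) : ℝ :=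
  Real.sqrt (⨆ i, (Matrix.isHermitian_conjTranspose_mul_self A).eigenvalues i)

/-!
With `c = 1 / (n₊ n₋)` we have `L = c • L_G`, where `L_G` is the Laplacian of the complete
bipartite graph `G` between `S₊` and `S₋`. Graph Laplacians are positive semidefinite, and for
any graph on `n` vertices `xᵀ L_G x = ½ ∑_{i ∼ j} (xᵢ - xⱼ)² ≤ ½ ∑_{i,j} (xᵢ - xⱼ)² ≤ n ‖x‖²`.
For `G` this bound is attained by the vector equal to `n₋` on `S₊` and `-n₊` on `S₋`, so the
spectrum of `L` lies in `[0, c n]` and contains `c n`. Finally, the spectrum of `Lᵀ L = L²` is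
the image of that of `L` under squaring, so the spectral norm of `L` is `c n`.
-/

open Finset

section Spectrum

variable {K ι : Type*} [Field K] [Fintype ι] [DecidableEq ι]

theorem Matrix.exists_mulVec_eq_smul_of_mem_spectrum {A : Matrix ι ι K} {μ : K}
    (hμ : μ ∈ spectrum K A) : ∃ v, v ≠ 0 ∧ A *ᵥ v = μ • v := by
  rw [← spectrum_toLin', ← Module.End.hasEigenvalue_iff_mem_spectrum] at hμ
  obtain ⟨v, hv⟩ := hμ.exists_hasEigenvector
  exact ⟨v, hv.2, hv.apply_eq_smul⟩

theorem Matrix.mem_spectrum_of_mulVec_eq_smul {A : Matrix ι ι K} {μ : K} {v : ι → K}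
    (hv : v ≠ 0) (hAv : A *ᵥ v = μ • v) : μ ∈ spectrum K A := by
  rw [← spectrum_toLin', ← Module.End.hasEigenvalue_iff_mem_spectrum]
  exact Module.End.hasEigenvalue_of_hasEigenvector ⟨Module.End.mem_eigenspace_iff.mpr hAv, hv⟩

theorem Matrix.mem_Icc_of_mem_spectrum [LinearOrder K] [IsStrictOrderedRing K]
    {A : Matrix ι ι K} {a b μ : K} (hlow : ∀ v, a * (v ⬝ᵥ v) ≤ v ⬝ᵥ (A *ᵥ v))
    (hup : ∀ v, v ⬝ᵥ (A *ᵥ v) ≤ b * (v ⬝ᵥ v)) (hμ : μ ∈ spectrum K A) : μ ∈ Set.Icc a b := by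
  obtain ⟨v, hv, hAv⟩ := exists_mulVec_eq_smul_of_mem_spectrum hμ
  have hvv : 0 < v ⬝ᵥ v :=
    lt_of_le_of_ne (sum_nonneg fun i _ => mul_self_nonneg (v i))
      (Ne.symm (dotProduct_self_eq_zero.not.mpr hv))
  have hquad : v ⬝ᵥ (A *ᵥ v) = μ * (v ⬝ᵥ v) := by rw [hAv, dotProduct_smul, smul_eq_mul]
  exact ⟨le_of_mul_le_mul_right (hquad ▸ hlow v) hvv, le_of_mul_le_mul_right (hquad ▸ hup v) hvv⟩

end Spectrum

theorem matSpectralNorm_eq_of_isSymm {n : ℕ} {A : Matrix (Fin n) (Fin n) ℝ} (hA : A.IsSymm)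
    {r : ℝ} (hr : 0 ≤ r) (hmem : r ∈ spectrum ℝ A) (hbound : ∀ μ ∈ spectrum ℝ A, |μ| ≤ r) :
    matSpectralNorm A = r := by
  have hH : A.IsHermitian := by rw [IsHermitian, conjTranspose_eq_transpose_of_trivial, hA.eq]
  have hsq : spectrum ℝ (Aᴴ * A) = (· ^ 2) '' spectrum ℝ A := by
    rw [hH.eq, ← sq, ← cfc_pow_id (R := ℝ) A 2 hH.isSelfAdjoint, cfc_map_spectrum (R := ℝ) _ A]
  have hgreatest : IsGreatest (spectrum ℝ (Aᴴ * A)) (r ^ 2) := by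
    rw [hsq]
    refine ⟨⟨r, hmem, rfl⟩, ?_⟩
    rintro _ ⟨μ, hμ, rfl⟩
    exact sq_le_sq.mpr ((hbound μ hμ).trans (le_abs_self r))
  rw [matSpectralNorm, ← sSup_range,
    ← (isHermitian_conjTranspose_mul_self A).spectrum_real_eq_range_eigenvalues,
    hgreatest.csSup_eq, Real.sqrt_sq hr]

namespace SimpleGraph

variable {V : Type*} [Fintype V] [DecidableEq V]

theorem dotProduct_lapMatrix_mulVec_le (G : SimpleGraph V) [DecidableRel G.Adj] (x : V → ℝ) :
    x ⬝ᵥ (G.lapMatrix ℝ *ᵥ x) ≤ Fintype.card V * (x ⬝ᵥ x) := by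
  have hpairs : ∑ i, ∑ j, (x i - x j) ^ 2 = 2 * (Fintype.card V * (x ⬝ᵥ x) - (∑ i, x i) ^ 2) := by
    have hexpand : ∀ i j, (x i - x j) ^ 2 = x i ^ 2 + x j ^ 2 - 2 * (x i * x j) := fun i j => by
      ring
    simp_rw [hexpand, sum_sub_distrib, sum_add_distrib, sum_const, card_univ, nsmul_eq_mul,
      ← mul_sum, ← sum_mul, dotProduct, ← sq]
    ring
  rw [← toLinearMap₂'_apply', lapMatrix_toLinearMap₂']
  calc (∑ i, ∑ j, if G.Adj i j then (x i - x j) ^ 2 else 0) / 2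
      ≤ (∑ i, ∑ j, (x i - x j) ^ 2) / 2 := by
        gcongr with i _ j _
        split_ifs
        exacts [le_rfl, sq_nonneg _]
    _ = Fintype.card V * (x ⬝ᵥ x) - (∑ i, x i) ^ 2 := by rw [hpairs]; ring
    _ ≤ Fintype.card V * (x ⬝ᵥ x) := sub_le_self _ (sq_nonneg _)

end SimpleGraph

section AUCGraph

variable {V : Type*} {Sp Sm : Finset V}

def aucGraph (Sp Sm : Finset V) : SimpleGraph V :=
  SimpleGraph.fromRel fun k m => k ∈ Sp ∧ m ∈ Sm

instance [DecidableEq V] (Sp Sm : Finset V) : DecidableRel (aucGraph Sp Sm).Adj :=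
  fun k m => decidable_of_iff' _ (SimpleGraph.fromRel_adj _ k m)

theorem aucGraph_adj (hdisj : Disjoint Sp Sm) {k m : V} :
    (aucGraph Sp Sm).Adj k m ↔ (k ∈ Sp ∧ m ∈ Sm) ∨ (k ∈ Sm ∧ m ∈ Sp) := by
  rw [aucGraph, SimpleGraph.fromRel_adj, and_comm (a := m ∈ Sp), and_iff_right_iff_imp]
  rintro (⟨hk, hm⟩ | ⟨hk, hm⟩) rfl
  · exact disjoint_left.mp hdisj hk hm
  · exact disjoint_left.mp hdisj hm hk

variable [Fintype V] [DecidableEq V]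

theorem neighborFinset_aucGraph_of_mem_left (hdisj : Disjoint Sp Sm) {k : V} (hk : k ∈ Sp) :
    (aucGraph Sp Sm).neighborFinset k = Sm := by
  ext m
  simp [aucGraph_adj hdisj, hk, disjoint_left.mp hdisj hk]

theorem neighborFinset_aucGraph_of_mem_right (hdisj : Disjoint Sp Sm) {k : V} (hk : k ∈ Sm) :
    (aucGraph Sp Sm).neighborFinset k = Sp := by
  ext m
  simp [aucGraph_adj hdisj, hk, disjoint_right.mp hdisj hk]

theorem lapMatrix_aucGraph_mulVec_eq_smul (hdisj : Disjoint Sp Sm) (hunion : Sp ∪ Sm = univ) :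
    (aucGraph Sp Sm).lapMatrix ℝ *ᵥ (fun k => if k ∈ Sp then (#Sm : ℝ) else -#Sp) =
      ((#Sp : ℝ) + #Sm) • fun k => if k ∈ Sp then (#Sm : ℝ) else -#Sp := by
  ext k
  rw [SimpleGraph.lapMatrix_mulVec_apply, ← SimpleGraph.card_neighborFinset_eq_degree]
  rcases mem_union.mp (hunion ▸ mem_univ k) with hk | hk
  · rw [neighborFinset_aucGraph_of_mem_left hdisj hk,
      sum_congr rfl fun m hm => if_neg (disjoint_right.mp hdisj hm)]
    simp [hk]
    ring
  · rw [neighborFinset_aucGraph_of_mem_right hdisj hk,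
      sum_congr rfl fun m hm => if_pos hm]
    simp [disjoint_right.mp hdisj hk]
    ring

theorem eq_smul_lapMatrix_aucGraph (hdisj : Disjoint Sp Sm) {c : ℝ} {W L : Matrix V V ℝ}
    (hW : ∀ k m, W k m = if (k ∈ Sp ∧ m ∈ Sm) ∨ (k ∈ Sm ∧ m ∈ Sp) then c else 0)
    (hL : L = Matrix.diagonal (fun k => ∑ m, W k m) - W) :
    L = c • (aucGraph Sp Sm).lapMatrix ℝ := by
  have hWadj : W = c • (aucGraph Sp Sm).adjMatrix ℝ := by
    ext k m
    simp [hW, aucGraph_adj hdisj]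
  rw [hL, hWadj, SimpleGraph.lapMatrix, SimpleGraph.degMatrix, smul_sub]
  congr 1
  ext k m
  simp [diagonal_apply, SimpleGraph.adjMatrix_apply, sum_ite, mul_comm,
    ← SimpleGraph.card_neighborFinset_eq_degree, SimpleGraph.neighborFinset_eq_filter]

end AUCGraph

theorem stmt6_general {n : ℕ} (Sp Sm : Finset (Fin n))
    (hdisj : Disjoint Sp Sm) (hunion : Sp ∪ Sm = Finset.univ)
    (hp : 1 ≤ Sp.card) (hm : 1 ≤ Sm.card)
    (W L : Matrix (Fin n) (Fin n) ℝ)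
    (hW : ∀ k m : Fin n, W k m =
      if (k ∈ Sp ∧ m ∈ Sm) ∨ (k ∈ Sm ∧ m ∈ Sp) then
        1 / ((Sp.card : ℝ) * (Sm.card : ℝ)) else 0)
    (hL : L = Matrix.diagonal (fun k => ∑ m, W k m) - W) :
    L.IsSymm ∧ L.PosSemidef ∧
    matSpectralNorm L = ((Sp.card : ℝ) + (Sm.card : ℝ)) / ((Sp.card : ℝ) * (Sm.card : ℝ)) ∧
    ∀ μ ∈ spectrum ℝ L,
      μ ∈ Set.Icc (0 : ℝ) ((n : ℝ) / ((Sp.card : ℝ) * (Sm.card : ℝ))) := by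
  set c : ℝ := 1 / ((#Sp : ℝ) * #Sm)
  have hc : 0 ≤ c := by positivity
  have hcard : (#Sp : ℝ) + #Sm = n := by
    rw [← Nat.cast_add, ← card_union_of_disjoint hdisj, hunion, card_univ, Fintype.card_fin]
  have hLG := eq_smul_lapMatrix_aucGraph hdisj hW hL
  have hPSD : L.PosSemidef := hLG ▸ (SimpleGraph.posSemidef_lapMatrix ℝ _).smul hc
  have hspec : ∀ μ ∈ spectrum ℝ L, μ ∈ Set.Icc 0 (c * n) := by
    refine fun μ => mem_Icc_of_mem_spectrum (fun v => ?_) (fun v => ?_)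
    · simpa using hPSD.dotProduct_mulVec_nonneg v
    · rw [hLG, smul_mulVec, dotProduct_smul, smul_eq_mul, mul_assoc]
      simpa using mul_le_mul_of_nonneg_left ((aucGraph Sp Sm).dotProduct_lapMatrix_mulVec_le v) hc
  have htop : c * n ∈ spectrum ℝ L := by
    obtain ⟨k, hk⟩ := card_pos.mp hp
    refine mem_spectrum_of_mulVec_eq_smul (v := fun k => if k ∈ Sp then (#Sm : ℝ) else -#Sp)
      (Function.ne_iff.mpr ⟨k, by simpa [hk, nonempty_iff_ne_empty] using card_pos.mp hm⟩) ?_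
    rw [hLG, smul_mulVec, lapMatrix_aucGraph_mulVec_eq_smul hdisj hunion, smul_smul, hcard]
  have hsymm : L.IsSymm := hLG ▸ (SimpleGraph.isSymm_lapMatrix ℝ _).smul c
  refine ⟨hsymm, hPSD, ?_, one_div_mul_eq_div _ (n : ℝ) ▸ hspec⟩
  rw [matSpectralNorm_eq_of_isSymm hsymm (by positivity) htop
    fun μ hμ => abs_le.mpr ⟨by linarith [(hspec μ hμ).1, (hspec μ hμ).2], (hspec μ hμ).2⟩, hcard]
  exact one_div_mul_eq_div _ _

/-- the Laplacian `L = diag(W·1) − W` of the AUC graph is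
symmetric positive semidefinite, its spectral norm equals
`(n₊ + n₋)/(n₊ n₋)`, and every (real) eigenvalue of `L` lies in
`[0, n/(n₊ n₋)]` with `n = n₊ + n₋`. -/
theorem stmt6 {n : ℕ} (hn : 2 ≤ n) (Sp Sm : Finset (Fin n))
    (hdisj : Disjoint Sp Sm) (hunion : Sp ∪ Sm = Finset.univ)
    (hp : 1 ≤ Sp.card) (hm : 1 ≤ Sm.card)
    (W L : Matrix (Fin n) (Fin n) ℝ)
    (hW : ∀ k m : Fin n, W k m =
      if (k ∈ Sp ∧ m ∈ Sm) ∨ (k ∈ Sm ∧ m ∈ Sp) then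
        1 / ((Sp.card : ℝ) * (Sm.card : ℝ)) else 0)
    (hL : L = Matrix.diagonal (fun k => ∑ m, W k m) - W) :
    L.IsSymm ∧ L.PosSemidef ∧
    matSpectralNorm L = ((Sp.card : ℝ) + (Sm.card : ℝ)) / ((Sp.card : ℝ) * (Sm.card : ℝ)) ∧
    ∀ μ ∈ spectrum ℝ L,
      μ ∈ Set.Icc (0 : ℝ) ((n : ℝ) / ((Sp.card : ℝ) * (Sm.card : ℝ))) :=
  stmt6_general Sp Sm hdisj hunion hp hm W L hW hL
end
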